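/- Summing the trajectory balance identity over all trajectories terminating at a fixed terminal x yields Z · π(x) = R(x), where π(x) is the forward-policy probability of terminating at x; hence Z = Σ_{x∈X} R(x). -/

import Mathlib

open Finset

theorem mul_sum_fiber_eq_of_balance {T S α : Type*} [Fintype T] [DecidableEq S]
    [CommSemiring α] {term : T → S} {pF pB : T → α} {Z : α} {R : S → α}
    (hTB : ∀ τ, Z * pF τ = R (term τ) * pB τ) (x : S) :
    Z * ∑ τ ∈ univ.filter (fun τ => term τ = x), pF τ
      = R x * ∑ τ ∈ univ.filter (fun τ => term τ = x), pB τ := by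
  rw [mul_sum, mul_sum]
  refine sum_congr rfl fun τ hτ => ?_
  rw [hTB, (mem_filter.1 hτ).2]

theorem tb_sum_identity_general
    {T S : Type*} [Fintype T] [DecidableEq S]
    (X : Finset S)                      -- terminal states
    (term : T → S) (hterm : ∀ τ, term τ ∈ X)
    (pF pB : T → ℝ) (Z : ℝ)
    (R : S → ℝ)
    -- trajectory balance identity for every complete trajectory
    (hTB : ∀ τ : T, Z * pF τ = R (term τ) * pB τ)
    -- backward trajectory probabilities from each terminal sum to 1
    (hB : ∀ x ∈ X, ∑ τ ∈ Finset.univ.filter (fun τ => term τ = x), pB τ = 1)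
    -- forward policy is a probability over complete trajectories
    (hFsum : ∑ τ : T, pF τ = 1)
    (π : S → ℝ)
    (hπ : ∀ x, π x = ∑ τ ∈ Finset.univ.filter (fun τ => term τ = x), pF τ) :
    (∀ x ∈ X, Z * π x = R x) ∧ Z = ∑ x ∈ X, R x := by
  have hterminal : ∀ x ∈ X, Z * π x = R x := fun x hx => by
    rw [hπ, mul_sum_fiber_eq_of_balance hTB, hB x hx, mul_one]
  refine ⟨hterminal, ?_⟩
  calc Z = Z * ∑ τ, pF τ := by rw [hFsum, mul_one]
    _ = ∑ x ∈ X, Z * π x := by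
      rw [← sum_fiberwise_of_maps_to fun τ _ => hterm τ, mul_sum]
      simp only [hπ]
    _ = ∑ x ∈ X, R x := sum_congr rfl hterminal

/-- **TB consistency.** Trajectories of a finite DAG are abstracted as a finite type `T`;
`term τ` is the terminal state of trajectory `τ`, `pF τ` (resp. `pB τ`) is the product of
forward (resp. backward) transition probabilities along `τ`. -/
theorem tb_sum_identity
    {T S : Type*} [Fintype T] [DecidableEq S]
    (X : Finset S)                      -- terminal states
    (term : T → S) (hterm : ∀ τ, term τ ∈ X)
    (pF pB : T → ℝ) (Z : ℝ) (hZ : 0 < Z)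
    (R : S → ℝ) (hR : ∀ x ∈ X, 0 ≤ R x) (hRpos : 0 < ∑ x ∈ X, R x)
    -- trajectory balance identity for every complete trajectory
    (hTB : ∀ τ : T, Z * pF τ = R (term τ) * pB τ)
    -- backward trajectory probabilities from each terminal sum to 1
    (hB : ∀ x ∈ X, ∑ τ ∈ Finset.univ.filter (fun τ => term τ = x), pB τ = 1)
    -- forward policy is a probability over complete trajectories
    (hFsum : ∑ τ : T, pF τ = 1)
    (π : S → ℝ)
    (hπ : ∀ x, π x = ∑ τ ∈ Finset.univ.filter (fun τ => term τ = x), pF τ) :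
    (∀ x ∈ X, Z * π x = R x) ∧ Z = ∑ x ∈ X, R x :=
  tb_sum_identity_general X term hterm pF pB Z R hTB hB hFsum π hπ
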